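/- arXiv:2404.16340 — 7 statements merged into one kernel-verified Lean document; each statement's English description precedes it below -/
import Mathlib

section
/- A vertex colouring φ : V(G) → {1,…,k} of a graph G is an ℓ-vertex-ranking of G if and only if for every path v₀,v₁,…,v_r in G with 1 ≤ r ≤ ℓ edges, either φ(v₀) ≠ φ(v_r) or max{φ(v₁),…,φ(v_{r−1})} > φ(v₀). -/
/-- `φ` is an `ℓ`-vertex-ranking of `G`. -/
def IsVertexRanking {V : Type*} (G : SimpleGraph V) (ℓ : ℕ) (φ : V → ℕ) : Prop :=
  ∀ H : G.Subgraph, H.Connected → (∀ u v : H.verts, H.coe.dist u v ≤ ℓ) →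
    ∃ v ∈ H.verts, ∀ w ∈ H.verts, w ≠ v → φ w < φ v

/-- The `ℓ`-vertex-ranking number of `G`. -/
noncomputable def rankingNumber {V : Type*} (G : SimpleGraph V) (ℓ : ℕ) : ℕ :=
  sInf {k | ∃ φ : V → ℕ, (∀ v, 1 ≤ φ v ∧ φ v ≤ k) ∧ IsVertexRanking G ℓ φ}

/-- `G` is `d`-degenerate. -/
def IsDegenerate {V : Type*} (G : SimpleGraph V) (d : ℕ) : Prop :=
  ∀ s : Set V, s.Nonempty →
    ∃ v ∈ s, (s ∩ G.neighborSet v).Finite ∧ (s ∩ G.neighborSet v).ncard ≤ d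

/-- `G` has maximum degree at most `Δ`. -/
def MaxDegreeLE {V : Type*} (G : SimpleGraph V) (Δ : ℕ) : Prop :=
  ∀ v, (G.neighborSet v).Finite ∧ (G.neighborSet v).ncard ≤ Δ

namespace SimpleGraph

variable {V : Type*} {G : SimpleGraph V}

theorem Walk.IsSubwalk.toSubgraph_le {u v u' v' : V} {p : G.Walk u v} {q : G.Walk u' v'}
    (h : p.IsSubwalk q) : p.toSubgraph ≤ q.toSubgraph := by
  obtain ⟨ru, rv, rfl⟩ := h
  simp only [Walk.toSubgraph_append]
  exact le_sup_right.trans le_sup_left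

theorem Walk.IsPath.ne_of_length_pos {u v : V} {p : G.Walk u v} (hp : p.IsPath)
    (hlen : 0 < p.length) : u ≠ v := by
  rintro rfl
  exact Walk.not_nil_iff_lt_length.mpr hlen (Walk.isPath_iff_nil.mp hp)

/-- The witness is the segment of `p` between `a` and `b`, reversed if `b` comes first. -/
theorem Walk.exists_walk_toSubgraph_le_length_le {u v a b : V} (p : G.Walk u v)
    (ha : a ∈ p.support) (hb : b ∈ p.support) :
    ∃ q : G.Walk a b, q.toSubgraph ≤ p.toSubgraph ∧ q.length ≤ p.length := by
  classical
  have hb' : b ∈ (p.takeUntil a ha).support ∨ b ∈ (p.dropUntil a ha).support := by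
    rw [← Walk.mem_support_append_iff, p.take_spec ha]
    exact hb
  rcases hb' with hb | hb
  · have hsub := (Walk.isSubwalk_dropUntil _ hb).trans (p.isSubwalk_takeUntil ha)
    refine ⟨((p.takeUntil a ha).dropUntil b hb).reverse, ?_, ?_⟩
    · simpa only [Walk.toSubgraph_reverse] using hsub.toSubgraph_le
    · simpa only [Walk.length_reverse] using Walk.length_le_of_isSubwalk hsub
  · have hsub := (Walk.isSubwalk_takeUntil _ hb).trans (p.isSubwalk_dropUntil ha)
    exact ⟨_, hsub.toSubgraph_le, Walk.length_le_of_isSubwalk hsub⟩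

theorem Subgraph.dist_coe_le_length {H : G.Subgraph} {a b : V} (q : G.Walk a b)
    (hq : q.toSubgraph ≤ H) (ha : a ∈ H.verts) (hb : b ∈ H.verts) :
    H.coe.dist ⟨a, ha⟩ ⟨b, hb⟩ ≤ q.length := by
  have hlen : q.mapToSubgraph.length = q.length :=
    (Walk.length_map _ _).symm.trans (congrArg Walk.length q.map_mapToSubgraph_hom)
  let q' : H.coe.Walk ⟨a, ha⟩ ⟨b, hb⟩ := q.mapToSubgraph.map (Subgraph.inclusion hq)
  calc H.coe.dist ⟨a, ha⟩ ⟨b, hb⟩ ≤ q'.length := dist_le q'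
    _ = q.length := (Walk.length_map _ _).trans hlen

theorem Walk.dist_toSubgraph_coe_le_length {u v : V} (p : G.Walk u v)
    (x y : p.toSubgraph.verts) : p.toSubgraph.coe.dist x y ≤ p.length := by
  obtain ⟨a, ha⟩ := x
  obtain ⟨b, hb⟩ := y
  obtain ⟨q, hq, hlen⟩ := p.exists_walk_toSubgraph_le_length_le
    (p.mem_verts_toSubgraph.mp ha) (p.mem_verts_toSubgraph.mp hb)
  exact (Subgraph.dist_coe_le_length q hq ha hb).trans hlen

end SimpleGraph

open SimpleGraph

section

variable {V : Type*} {G : SimpleGraph V} {ℓ : ℕ} {φ : V → ℕ}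

/-- The subgraph traced by a walk of length at most `ℓ` has diameter at most `ℓ`, so it has a
unique vertex of maximum colour; it is either an end, or an internal vertex beating both ends. -/
theorem IsVertexRanking.ne_or_exists_lt {v w : V} (hφ : IsVertexRanking G ℓ φ) (p : G.Walk v w)
    (hvw : v ≠ w) (hℓ : p.length ≤ ℓ) :
    φ v ≠ φ w ∨ ∃ u ∈ p.support, u ≠ v ∧ u ≠ w ∧ φ v < φ u := by
  obtain ⟨m, hm, hmax⟩ := hφ p.toSubgraph p.toSubgraph_connected
    fun x y ↦ (p.dist_toSubgraph_coe_le_length x y).trans hℓ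
  have hv := hmax v p.start_mem_verts_toSubgraph
  have hw := hmax w p.end_mem_verts_toSubgraph
  by_cases hmv : m = v
  · subst hmv
    exact .inl (hw hvw.symm).ne'
  by_cases hmw : m = w
  · subst hmw
    exact .inl (hv hvw).ne
  exact .inr ⟨m, p.mem_verts_toSubgraph.mp hm, hmv, hmw, hv (Ne.symm hmv)⟩

/-- If two vertices of `H` both had the maximum colour, a shortest path between them inside `H`
would have length at most `ℓ` and no internal vertex of larger colour. -/
theorem isVertexRanking_of_forall_isPath (hbdd : BddAbove (Set.range φ))
    (hpath : ∀ (v w : V) (p : G.Walk v w), p.IsPath → 1 ≤ p.length → p.length ≤ ℓ →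
      (φ v ≠ φ w ∨ ∃ u ∈ p.support, u ≠ v ∧ u ≠ w ∧ φ v < φ u)) :
    IsVertexRanking G ℓ φ := by
  intro H hconn hdiam
  obtain ⟨_, ⟨v, hv, rfl⟩, hmax⟩ := (hbdd.mono (Set.image_subset_range φ H.verts))
    |>.exists_isGreatest_of_nonempty (hconn.nonempty.image φ)
  refine ⟨v, hv, fun w hw hwv ↦ (hmax ⟨w, hw, rfl⟩).lt_of_ne fun hφw ↦ ?_⟩
  obtain ⟨q, hq, hqlen⟩ := (hconn.coe ⟨w, hw⟩ ⟨v, hv⟩).exists_path_of_dist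
  have hq_pos : 1 ≤ q.length := by
    rw [Nat.one_le_iff_ne_zero]
    exact fun h0 ↦ hwv (congrArg Subtype.val (Walk.eq_of_length_eq_zero h0))
  let p : G.Walk w v := q.map H.hom
  have hp_len : p.length = q.length := Walk.length_map _ _
  rcases hpath w v p (hq.map Subgraph.hom_injective) (hp_len ▸ hq_pos)
      (hp_len ▸ hqlen ▸ hdiam ⟨w, hw⟩ ⟨v, hv⟩) with hne | ⟨u, hu, -, -, hlt⟩
  · exact hne hφw
  · rw [show p.support = q.support.map H.hom from Walk.support_map _ _, List.mem_map] at hu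
    obtain ⟨x, -, rfl⟩ := hu
    exact (hmax ⟨_, x.2, rfl⟩).not_gt (hφw ▸ hlt)

end

/-- A colouring φ : V(G) → {1,…,k} is an ℓ-vertex-ranking of G iff for every path
v₀,…,v_r in G with 1 ≤ r ≤ ℓ edges, either φ(v₀) ≠ φ(v_r) or some internal vertex u of the
path has φ(u) > φ(v₀). -/
theorem stmt5 {V : Type*} (G : SimpleGraph V) (ℓ k : ℕ) (φ : V → ℕ)
    (hφ : ∀ v, 1 ≤ φ v ∧ φ v ≤ k) :
    IsVertexRanking G ℓ φ ↔
      ∀ (v w : V) (p : G.Walk v w), p.IsPath → 1 ≤ p.length → p.length ≤ ℓ →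
        (φ v ≠ φ w ∨ ∃ u ∈ p.support, u ≠ v ∧ u ≠ w ∧ φ v < φ u) :=
  ⟨fun h v w p hp hpos hℓ ↦ h.ne_or_exists_lt p (hp.ne_of_length_pos hpos) hℓ,
    isVertexRanking_of_forall_isPath ⟨k, by rintro _ ⟨v, rfl⟩; exact (hφ v).2⟩⟩
end

section
/- For any integers d ≥ 2, ℓ ≥ 2, Δ ≥ d and any n-vertex graph G of maximum degree at most Δ that has an orientation of maximum out-degree at most d, the number of undirected paths in G of length at least 1 and at most ℓ satisfies |P_ℓ(G)| ≤ n·2^{ℓ+1}·d^{⌈ℓ/2⌉}·Δ^{⌊ℓ/2⌋}. -/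
/-- A walk of `G` bundled with its two endpoints. -/
abbrev WalkSig {V : Type*} (G : SimpleGraph V) : Type _ := Σ v w : V, G.Walk v w

/-- Reversal of a bundled walk. -/
def WalkSig.rev {V : Type*} {G : SimpleGraph V} (q : WalkSig G) : WalkSig G :=
  ⟨q.2.1, q.1, q.2.2.reverse⟩

lemma WalkSig.rev_rev {V : Type*} {G : SimpleGraph V} (q : WalkSig G) : q.rev.rev = q := by
  rcases q with ⟨v, w, p⟩
  simp [WalkSig.rev]

/-- Identify a walk with its reversal: an equivalence class is an "undirected" walk. -/
def walkSetoid {V : Type*} (G : SimpleGraph V) : Setoid (WalkSig G) where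
  r q q' := q' = q ∨ q' = q.rev
  iseqv := by
    refine ⟨fun q => Or.inl rfl, ?_, ?_⟩
    · rintro q q' (rfl | rfl)
      · exact Or.inl rfl
      · exact Or.inr (WalkSig.rev_rev q).symm
    · rintro q q' q'' (rfl | rfl) h
      · exact h
      · rcases h with rfl | rfl
        · exact Or.inr rfl
        · exact Or.inl (WalkSig.rev_rev q)

/-- Undirected walks of `G`. -/
def UWalk {V : Type*} (G : SimpleGraph V) : Type _ := Quotient (walkSetoid G)

/-- `q` is a path of length at least 1 and at most `ℓ`. -/
def IsPathLE {V : Type*} (G : SimpleGraph V) (ℓ : ℕ) (q : WalkSig G) : Prop :=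
  q.2.2.IsPath ∧ 1 ≤ q.2.2.length ∧ q.2.2.length ≤ ℓ

/-- `P_ℓ(G)`: the set of undirected paths of `G` of length at least 1 and at most `ℓ`. -/
def PathsLE {V : Type*} (G : SimpleGraph V) (ℓ : ℕ) : Set (UWalk G) :=
  {P | ∃ q : WalkSig G, Quotient.mk (walkSetoid G) q = P ∧ IsPathLE G ℓ q}


open Classical in
/-- The orientation pattern of a walk. -/
noncomputable def pat {V : Type*} {G : SimpleGraph V} (o : V → V → Prop) {u w : V}
    (p : G.Walk u w) : List Bool :=
  p.darts.map (fun e => if o e.fst e.snd then true else false)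

lemma pat_nil {V : Type*} {G : SimpleGraph V} (o : V → V → Prop) {u : V} :
    pat o (SimpleGraph.Walk.nil : G.Walk u u) = [] := by simp [pat]

open Classical in
lemma pat_cons {V : Type*} {G : SimpleGraph V} (o : V → V → Prop) {u v w : V}
    (h : G.Adj u v) (p : G.Walk v w) :
    pat o (SimpleGraph.Walk.cons h p) = (if o u v then true else false) :: pat o p := by
  simp [pat, SimpleGraph.Walk.darts_cons]

lemma length_pat {V : Type*} {G : SimpleGraph V} (o : V → V → Prop) {u w : V}
    (p : G.Walk u w) : (pat o p).length = p.length := by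
  simp [pat, SimpleGraph.Walk.length_darts]

lemma pat_reverse {V : Type*} {G : SimpleGraph V} (o : V → V → Prop)
    (ho_or : ∀ v w, G.Adj v w → (o v w ↔ ¬ o w v)) {u w : V} (p : G.Walk u w) :
    pat o p.reverse = ((pat o p).map (fun b => !b)).reverse := by
  classical
  simp only [pat, SimpleGraph.Walk.darts_reverse, List.map_reverse, List.map_map]
  congr 1
  apply List.map_congr_left
  intro e _
  have hadj := e.adj
  have h2 := ho_or e.fst e.snd hadj
  simp only [Function.comp, SimpleGraph.Dart.symm]
  by_cases h : o e.fst e.snd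
  · simp [h, h2.mp h]
  · have h3 : o e.snd e.fst := by
      have := ho_or e.snd e.fst hadj.symm
      tauto
    simp [h, h3]

lemma ncard_biUnion_le' {α β : Type*} (s : Finset α) (f : α → Set β) :
    (⋃ a ∈ s, f a).ncard ≤ ∑ a ∈ s, (f a).ncard := by
  classical
  induction s using Finset.induction with
  | empty => simp
  | @insert x s hx ih =>
    rw [Finset.sum_insert hx]
    calc (⋃ a ∈ insert x s, f a).ncard = (f x ∪ ⋃ a ∈ s, f a).ncard := by
          rw [Finset.set_biUnion_insert]
      _ ≤ (f x).ncard + (⋃ a ∈ s, f a).ncard := Set.ncard_union_le _ _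
      _ ≤ (f x).ncard + ∑ a ∈ s, (f a).ncard := by omega

lemma count_walks {V : Type*} [Fintype V] {G : SimpleGraph V} (o : V → V → Prop)
    (d Δ : ℕ) (hmax : ∀ v, (G.neighborSet v).ncard ≤ Δ) (ho_out : ∀ v, {w | o v w}.ncard ≤ d) :
    ∀ (b : List Bool) (u : V),
    {q : Σ w : V, G.Walk u w | pat o q.2 = b}.Finite ∧
    {q : Σ w : V, G.Walk u w | pat o q.2 = b}.ncard ≤
      (b.map (fun c => if c then d else Δ)).prod := by
  classical
  intro b
  induction b with
  | nil =>
    intro u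
    have hsub : {q : Σ w : V, G.Walk u w | pat o q.2 = []} ⊆ {⟨u, SimpleGraph.Walk.nil⟩} := by
      rintro ⟨w, p⟩ hp
      cases p with
      | nil => rfl
      | cons h p' => simp [pat_cons] at hp
    refine ⟨(Set.finite_singleton _).subset hsub, ?_⟩
    calc _ ≤ ({⟨u, SimpleGraph.Walk.nil⟩} : Set (Σ w : V, G.Walk u w)).ncard :=
          Set.ncard_le_ncard hsub (Set.finite_singleton _)
      _ = 1 := Set.ncard_singleton _
      _ ≤ _ := by simp
  | cons c b' ih =>
    intro u
    set S : Set V := if c then {x | o u x} else G.neighborSet u with hS_def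
    have hSfin : S.Finite := Set.toFinite _
    have hScard : S.ncard ≤ (if c then d else Δ) := by
      cases c <;> simp [hS_def, ho_out, hmax]
    set F : V → Set (Σ w : V, G.Walk u w) := fun x =>
      if hadj : G.Adj u x then
        (fun r : (Σ w : V, G.Walk x w) => (⟨r.1, SimpleGraph.Walk.cons hadj r.2⟩ :
          Σ w : V, G.Walk u w)) '' {r : Σ w : V, G.Walk x w | pat o r.2 = b'}
      else ∅ with hF_def
    have hFfin : ∀ x, (F x).Finite := by
      intro x
      rw [hF_def]
      by_cases hadj : G.Adj u x
      · simp only [dif_pos hadj]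
        exact ((ih x).1).image _
      · simp [dif_neg hadj]
    have hFcard : ∀ x, (F x).ncard ≤ (b'.map (fun c => if c then d else Δ)).prod := by
      intro x
      rw [hF_def]
      by_cases hadj : G.Adj u x
      · simp only [dif_pos hadj]
        exact le_trans (Set.ncard_image_le (ih x).1) (ih x).2
      · simp [dif_neg hadj]
    have hsub : {q : Σ w : V, G.Walk u w | pat o q.2 = c :: b'} ⊆ ⋃ x ∈ hSfin.toFinset, F x := by
      rintro ⟨w, p⟩ hp
      cases p with
      | nil => simp [pat_nil] at hp
      | cons h p' =>
        rename_i x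
        rw [Set.mem_setOf_eq, pat_cons] at hp
        have hc : (if o u x then true else false) = c := (List.cons.injEq _ _ _ _ ▸ hp).1
        have hb' : pat o p' = b' := (List.cons.injEq _ _ _ _ ▸ hp).2
        have hxS : x ∈ S := by
          rw [hS_def]
          cases c with
          | true => by_cases ho : o u x <;> simp_all
          | false => simp only [Bool.false_eq_true, if_false]; exact h
        refine Set.mem_biUnion (hSfin.mem_toFinset.2 hxS) ?_
        rw [hF_def]
        simp only [dif_pos h]
        exact ⟨⟨w, p'⟩, hb', rfl⟩
    refine ⟨(hSfin.toFinset.finite_toSet.biUnion (fun x _ => hFfin x)).subset hsub, ?_⟩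
    calc {q : Σ w : V, G.Walk u w | pat o q.2 = c :: b'}.ncard
        ≤ (⋃ x ∈ hSfin.toFinset, F x).ncard := by
          exact Set.ncard_le_ncard hsub (hSfin.toFinset.finite_toSet.biUnion (fun x _ => hFfin x))
      _ ≤ ∑ x ∈ hSfin.toFinset, (F x).ncard := ncard_biUnion_le' _ _
      _ ≤ ∑ _x ∈ hSfin.toFinset, (b'.map (fun c => if c then d else Δ)).prod :=
          Finset.sum_le_sum (fun x _ => hFcard x)
      _ = hSfin.toFinset.card * (b'.map (fun c => if c then d else Δ)).prod := by
          rw [Finset.sum_const, smul_eq_mul]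
      _ ≤ (if c then d else Δ) * (b'.map (fun c => if c then d else Δ)).prod := by
          have : hSfin.toFinset.card = S.ncard := (Set.ncard_eq_toFinset_card S hSfin).symm
          exact Nat.mul_le_mul_right _ (this ▸ hScard)
      _ = ((c :: b').map (fun c => if c then d else Δ)).prod := by simp

lemma count_tf (l : List Bool) : l.count true + l.count false = l.length := by
  induction l with
  | nil => simp
  | cons c l ih => cases c <;> simp [List.count_cons] <;> omega

lemma count_not_map (l : List Bool) : (l.map (fun b => !b)).count true = l.count false := by
  induction l with
  | nil => simp
  | cons c l ih => cases c <;> simp [List.count_cons, ih]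

lemma prod_pat_eq (d Δ : ℕ) (b : List Bool) :
    (b.map fun c => if c then d else Δ).prod = d ^ b.count true * Δ ^ b.count false := by
  induction b with
  | nil => simp
  | cons c l ih =>
    cases c <;> simp [List.count_cons, pow_succ, ih] <;> ring

lemma prod_pat_le {d Δ ℓ : ℕ} (hd : 2 ≤ d) (hΔ : d ≤ Δ) {b : List Bool}
    (hlen : b.length ≤ ℓ) (hgood : b.length ≤ 2 * b.count true) :
    (b.map fun c => if c then d else Δ).prod ≤ d ^ ((ℓ + 1) / 2) * Δ ^ (ℓ / 2) := by
  have hprod := prod_pat_eq d Δ b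
  set k := b.length with hk
  set f := b.count true with hf
  set s := b.count false with hs
  have hfs : f + s = k := count_tf b
  have hf2 : (k + 1) / 2 ≤ f := by omega
  set e := f - (k + 1) / 2 with he
  have hfe : f = (k + 1) / 2 + e := by omega
  have hes : e + s = k / 2 := by omega
  calc (b.map fun c => if c then d else Δ).prod = d ^ f * Δ ^ s := hprod
    _ = d ^ ((k + 1) / 2) * (d ^ e * Δ ^ s) := by rw [hfe, pow_add]; ring
    _ ≤ d ^ ((k + 1) / 2) * (Δ ^ e * Δ ^ s) := by
        exact Nat.mul_le_mul_left _ (Nat.mul_le_mul_right _ (Nat.pow_le_pow_left hΔ e))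
    _ = d ^ ((k + 1) / 2) * Δ ^ (k / 2) := by rw [← pow_add, hes]
    _ ≤ d ^ ((ℓ + 1) / 2) * Δ ^ (ℓ / 2) := by
        exact Nat.mul_le_mul (Nat.pow_le_pow_right (by omega) (by omega))
          (Nat.pow_le_pow_right (by omega) (by omega))

lemma sum_pow_two_lt (m : ℕ) : ∑ k ∈ Finset.range m, 2 ^ k < 2 ^ m := by
  induction m with
  | zero => simp
  | succ m ih => rw [Finset.sum_range_succ, pow_succ]; omega

lemma sum_pow_two_Icc (ℓ : ℕ) : ∑ k ∈ Finset.Icc 1 ℓ, 2 ^ k ≤ 2 ^ (ℓ + 1) := by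
  have hsub : Finset.Icc 1 ℓ ⊆ Finset.range (ℓ + 1) := by
    intro k hk
    simp only [Finset.mem_Icc] at hk
    simp only [Finset.mem_range]
    omega
  calc ∑ k ∈ Finset.Icc 1 ℓ, 2 ^ k ≤ ∑ k ∈ Finset.range (ℓ + 1), 2 ^ k :=
        Finset.sum_le_sum_of_subset hsub
    _ ≤ 2 ^ (ℓ + 1) := (sum_pow_two_lt _).le

/-- For d ≥ 2, ℓ ≥ 2, Δ ≥ d and an n-vertex graph G of maximum degree at most Δ having an
orientation of maximum out-degree at most d, the number of undirected paths of length
between 1 and ℓ is at most n·2^(ℓ+1)·d^⌈ℓ/2⌉·Δ^⌊ℓ/2⌋. -/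
theorem stmt8 {V : Type*} [Fintype V] (G : SimpleGraph V) (d ℓ Δ n : ℕ)
    (hd : 2 ≤ d) (hℓ : 2 ≤ ℓ) (hΔ : d ≤ Δ) (hn : Fintype.card V = n)
    (hmax : ∀ v, (G.neighborSet v).ncard ≤ Δ)
    (o : V → V → Prop)
    (ho_adj : ∀ v w, o v w → G.Adj v w)
    (ho_or : ∀ v w, G.Adj v w → (o v w ↔ ¬ o w v))
    (ho_out : ∀ v, {w | o v w}.ncard ≤ d) :
    (PathsLE G ℓ).Finite ∧
      (PathsLE G ℓ).ncard ≤ n * (2 ^ (ℓ + 1) * d ^ ((ℓ + 1) / 2) * Δ ^ (ℓ / 2)) := by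
  classical
  set D : ℕ := d ^ ((ℓ + 1) / 2) * Δ ^ (ℓ / 2) with hD_def
  -- count identity for a walk and its reverse
  have hcount : ∀ (v w : V) (p : G.Walk v w),
      (pat o p).count true + (pat o p.reverse).count true = p.length := by
    intro v w p
    rw [pat_reverse o ho_or, List.count_reverse, count_not_map, count_tf, length_pat]
  set Good : Set (WalkSig G) :=
    {q | IsPathLE G ℓ q ∧ q.2.2.length ≤ 2 * (pat o q.2.2).count true} with hGood_def
  -- every path class has a good representative
  have hA : PathsLE G ℓ ⊆ (Quotient.mk (walkSetoid G)) '' Good := by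
    rintro P ⟨q, rfl, hq⟩
    by_cases hg : q.2.2.length ≤ 2 * (pat o q.2.2).count true
    · exact ⟨q, ⟨hq, hg⟩, rfl⟩
    · refine ⟨q.rev, ⟨⟨?_, ?_, ?_⟩, ?_⟩, ?_⟩
      · exact hq.1.reverse
      · rcases q with ⟨v, w, p⟩
        simpa [WalkSig.rev] using hq.2.1
      · rcases q with ⟨v, w, p⟩
        simpa [WalkSig.rev] using hq.2.2
      · rcases q with ⟨v, w, p⟩
        have h1 := hcount v w p
        simp only [WalkSig.rev] at *
        have h2 : p.reverse.length = p.length := SimpleGraph.Walk.length_reverse p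
        omega
      · exact Quotient.sound (Or.inr (WalkSig.rev_rev q).symm)
  -- the sets indexed by start vertex and pattern
  set A : V → List Bool → Set (WalkSig G) :=
    fun u b => {q | q.1 = u ∧ pat o q.2.2 = b} with hA_def
  have hA_img : ∀ u b, A u b =
      (fun r : Σ w : V, G.Walk u w => (⟨u, r.1, r.2⟩ : WalkSig G)) ''
        {r : Σ w : V, G.Walk u w | pat o r.2 = b} := by
    intro u b
    ext ⟨v, w, p⟩
    constructor
    · rintro ⟨h1, h2⟩
      dsimp at h1
      subst h1
      exact ⟨⟨w, p⟩, h2, rfl⟩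
    · rintro ⟨⟨w', p'⟩, hp', heq⟩
      cases heq
      exact ⟨rfl, hp'⟩
  have hcw := count_walks o d Δ hmax ho_out
  have hAfin : ∀ u b, (A u b).Finite := by
    intro u b
    rw [hA_img u b]
    exact ((hcw b u).1).image _
  have hAcard : ∀ u b, (A u b).ncard ≤ ((b.map fun c => if c then d else Δ)).prod := by
    intro u b
    rw [hA_img u b]
    exact le_trans (Set.ncard_image_le (hcw b u).1) (hcw b u).2
  -- pattern finsets
  set Pats : ℕ → Finset (List Bool) := fun k =>
    ((Finset.univ : Finset (Fin k → Bool)).image (fun g => List.ofFn g)).filter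
      (fun b => b.length ≤ 2 * b.count true) with hPats_def
  have hPats_card : ∀ k, (Pats k).card ≤ 2 ^ k := by
    intro k
    calc (Pats k).card ≤ ((Finset.univ : Finset (Fin k → Bool)).image
          (fun g => List.ofFn g)).card := Finset.card_filter_le _ _
      _ ≤ (Finset.univ : Finset (Fin k → Bool)).card := Finset.card_image_le
      _ = 2 ^ k := by simp
  have hPats_len : ∀ k b, b ∈ Pats k → b.length = k ∧ b.length ≤ 2 * b.count true := by
    intro k b hb
    rw [hPats_def, Finset.mem_filter, Finset.mem_image] at hb
    obtain ⟨⟨g, _, rfl⟩, h2⟩ := hb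
    exact ⟨by simp, h2⟩
  set BigU : Set (WalkSig G) := ⋃ u ∈ (Finset.univ : Finset V),
      ⋃ k ∈ Finset.Icc 1 ℓ, ⋃ b ∈ Pats k, A u b with hBigU_def
  have hBigU_fin : BigU.Finite := by
    refine (Finset.univ : Finset V).finite_toSet.biUnion (fun u _ => ?_)
    refine (Finset.Icc 1 ℓ).finite_toSet.biUnion (fun k _ => ?_)
    exact (Pats k).finite_toSet.biUnion (fun b _ => hAfin u b)
  have hGoodSub : Good ⊆ BigU := by
    rintro ⟨v, w, p⟩ ⟨hpath, hgood⟩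
    refine Set.mem_biUnion (Finset.mem_univ v) ?_
    refine Set.mem_biUnion (Finset.mem_Icc.2 ⟨?_, ?_⟩ :
      p.length ∈ Finset.Icc 1 ℓ) ?_
    · exact hpath.2.1
    · exact hpath.2.2
    · have hmem : (⟨v, w, p⟩ : WalkSig G) ∈ A v (pat o p) := ⟨rfl, rfl⟩
      refine Set.mem_biUnion ?_ hmem
      rw [hPats_def]
      refine Finset.mem_filter.2 ⟨Finset.mem_image.2
        ⟨fun i : Fin p.length => (pat o p).getD i false, Finset.mem_univ _, ?_⟩, ?_⟩
      · apply List.ext_getElem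
        · simp [length_pat]
        · intro i h1 h2
          simp [List.getElem_ofFn, List.getD_eq_getElem, h2]
      · rw [length_pat]
        exact hgood
  have hGood_fin : Good.Finite := hBigU_fin.subset hGoodSub
  -- counting
  have hBigU_card : BigU.ncard ≤ n * (2 ^ (ℓ + 1) * D) := by
    calc BigU.ncard ≤ ∑ u ∈ (Finset.univ : Finset V),
          (⋃ k ∈ Finset.Icc 1 ℓ, ⋃ b ∈ Pats k, A u b).ncard := ncard_biUnion_le' _ _
      _ ≤ ∑ _u ∈ (Finset.univ : Finset V), 2 ^ (ℓ + 1) * D := by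
          refine Finset.sum_le_sum (fun u _ => ?_)
          calc (⋃ k ∈ Finset.Icc 1 ℓ, ⋃ b ∈ Pats k, A u b).ncard
              ≤ ∑ k ∈ Finset.Icc 1 ℓ, (⋃ b ∈ Pats k, A u b).ncard := ncard_biUnion_le' _ _
            _ ≤ ∑ k ∈ Finset.Icc 1 ℓ, 2 ^ k * D := by
                refine Finset.sum_le_sum (fun k hk => ?_)
                have hkl : k ≤ ℓ := (Finset.mem_Icc.1 hk).2
                calc (⋃ b ∈ Pats k, A u b).ncard
                    ≤ ∑ b ∈ Pats k, (A u b).ncard := ncard_biUnion_le' _ _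
                  _ ≤ ∑ _b ∈ Pats k, D := by
                      refine Finset.sum_le_sum (fun b hb => ?_)
                      obtain ⟨hb1, hb2⟩ := hPats_len k b hb
                      exact le_trans (hAcard u b)
                        (prod_pat_le hd hΔ (by omega) hb2)
                  _ = (Pats k).card * D := by rw [Finset.sum_const, smul_eq_mul]
                  _ ≤ 2 ^ k * D := Nat.mul_le_mul_right _ (hPats_card k)
            _ = (∑ k ∈ Finset.Icc 1 ℓ, 2 ^ k) * D := by rw [Finset.sum_mul]
            _ ≤ 2 ^ (ℓ + 1) * D := Nat.mul_le_mul_right _ (sum_pow_two_Icc ℓ)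
      _ = n * (2 ^ (ℓ + 1) * D) := by
          rw [Finset.sum_const, smul_eq_mul, Finset.card_univ, hn]
  have hPfin : (PathsLE G ℓ).Finite := (hGood_fin.image _).subset hA
  refine ⟨hPfin, ?_⟩
  calc (PathsLE G ℓ).ncard
      ≤ ((Quotient.mk (walkSetoid G)) '' Good).ncard :=
        Set.ncard_le_ncard hA (hGood_fin.image _)
    _ ≤ Good.ncard := Set.ncard_image_le hGood_fin
    _ ≤ BigU.ncard := Set.ncard_le_ncard hGoodSub hBigU_fin
    _ ≤ n * (2 ^ (ℓ + 1) * D) := hBigU_card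
    _ = n * (2 ^ (ℓ + 1) * d ^ ((ℓ + 1) / 2) * Δ ^ (ℓ / 2)) := by
        rw [hD_def]; ring
end

section
/- For any integers d ≥ 2, ℓ ≥ 3, Δ ≥ d and any directed graph G' whose underlying undirected graph has maximum degree at most Δ and in which every vertex has out-degree at most d, there exists a mapping γ : P̂_ℓ(G') → V(G') such that (i) γ(Π) is a vertex of Π for each Π ∈ P̂_ℓ(G'), and (ii) |γ^{−1}(v)| ≤ 2^{ℓ}·d^{⌈ℓ/2⌉+1}·Δ^{⌊ℓ/2⌋−1} for each vertex v ∈ V(G'). -/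
/-- For a directed graph given by the edge relation `A` (with underlying undirected graph
`SimpleGraph.fromRel A`), a bundled walk `q` is in `P̂_ℓ` when it is a path of length
1 ≤ r ≤ ℓ whose first edge can be directed towards its first endpoint
(`A x₁ x₀`) and whose last edge can be directed towards its last endpoint
(`A x_{r-1} x_r`). -/
def PhatCond {V : Type*} (A : V → V → Prop) (ℓ : ℕ)
    (q : WalkSig (SimpleGraph.fromRel A)) : Prop :=
  IsPathLE (SimpleGraph.fromRel A) ℓ q ∧
    A (q.2.2.getVert 1) q.1 ∧ A (q.2.2.getVert (q.2.2.length - 1)) q.2.1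

/-- The set `P̂_ℓ(G')` of undirected paths, as equivalence classes. -/
def PhatPaths {V : Type*} (A : V → V → Prop) (ℓ : ℕ) :
    Set (UWalk (SimpleGraph.fromRel A)) :=
  {P | ∃ q, Quotient.mk (walkSetoid (SimpleGraph.fromRel A)) q = P ∧ PhatCond A ℓ q}

open Finset

section StepChains
variable {V : Type*} [DecidableEq V]

noncomputable def stepChains : (ℕ → V → Finset V) → V → ℕ → Finset (List V)
  | _, _, 0 => {[]}
  | step, v, n + 1 => (step 0 v).biUnion fun w =>
      (stepChains (fun t => step (t + 1)) w n).image (w :: ·)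

lemma card_stepChains_le {c : ℕ → ℕ} {step : ℕ → V → Finset V}
    (hc : ∀ t x, #(step t x) ≤ c t) (v : V) (n : ℕ) :
    #(stepChains step v n) ≤ ∏ t ∈ range n, c t := by
  induction n generalizing c step v with
  | zero => simp [stepChains]
  | succ n ih =>
    calc #(stepChains step v (n + 1))
        ≤ ∑ w ∈ step 0 v, #((stepChains (fun t => step (t + 1)) w n).image (w :: ·)) :=
          card_biUnion_le
      _ ≤ ∑ w ∈ step 0 v, ∏ t ∈ range n, c (t + 1) :=
          sum_le_sum fun w _ => card_image_le.trans (ih (fun t => hc (t + 1)) w)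
      _ ≤ c 0 * ∏ t ∈ range n, c (t + 1) := by
          rw [sum_const, smul_eq_mul]; exact Nat.mul_le_mul_right _ (hc 0 v)
      _ = ∏ t ∈ range (n + 1), c t := by rw [prod_range_succ', mul_comm]

lemma map_range_mem_stepChains {step : ℕ → V → Finset V} {f : ℕ → V} (n : ℕ)
    (hf : ∀ t < n, f (t + 1) ∈ step t (f t)) :
    (List.range n).map (fun t => f (t + 1)) ∈ stepChains step (f 0) n := by
  induction n generalizing step f with
  | zero => simp [stepChains]
  | succ n ih =>
    rw [List.range_succ_eq_map, List.map_cons, List.map_map, stepChains, mem_biUnion]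
    exact ⟨f 1, hf 0 n.succ_pos, mem_image_of_mem _
      (ih (f := fun t => f (t + 1)) fun t ht => hf (t + 1) (by omega))⟩

end StepChains

section SplitWalks
variable {V : Type*} {G : SimpleGraph V}

lemma SimpleGraph.Walk.support_eq_split {a b : V} (p : G.Walk a b) {j : ℕ} (hj : j ≤ p.length) :
    p.support = ((List.range j).map fun t => p.getVert (j - (t + 1))).reverse ++
      p.getVert j :: (List.range (p.length - j)).map fun t => p.getVert (j + (t + 1)) := by
  refine List.ext_getElem (by simp; omega) fun n h₁ h₂ => ?_
  rw [SimpleGraph.Walk.support_getElem_eq_getVert]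
  rcases lt_trichotomy n j with hn | rfl | hn
  · rw [List.getElem_append_left (by simpa using hn)]
    simp only [List.getElem_reverse, List.getElem_map, List.getElem_range, List.length_map,
      List.length_range]
    congr 1; omega
  · simp
  · rw [List.getElem_append_right (by simp; omega)]
    simp only [List.length_reverse, List.length_map, List.length_range]
    obtain ⟨k, rfl⟩ : ∃ k, n = j + (k + 1) := ⟨n - j - 1, by omega⟩
    simp only [show j + (k + 1) - j = k + 1 by omega, List.getElem_cons_succ, List.getElem_map,
      List.getElem_range]

variable [DecidableEq V]

noncomputable def splitSupports (step : ℕ → V → Finset V) (v : V) (r j : ℕ) : Finset (List V) :=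
  (stepChains (fun t => step (j - 1 - t)) v j ×ˢ stepChains (fun t => step (j + t)) v (r - j)).image
    fun LR => LR.1.reverse ++ v :: LR.2

lemma card_splitSupports_le (step : ℕ → V → Finset V) (c : ℕ → ℕ) (hc : ∀ i x, #(step i x) ≤ c i)
    (v : V) {r j : ℕ} (hj : j ≤ r) : #(splitSupports step v r j) ≤ ∏ i ∈ range r, c i := by
  calc #(splitSupports step v r j)
      ≤ (∏ t ∈ range j, c (j - 1 - t)) * ∏ t ∈ range (r - j), c (j + t) :=
        card_image_le.trans <| card_product _ _ ▸ Nat.mul_le_mul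
          (card_stepChains_le (fun t => hc _) v j) (card_stepChains_le (fun t => hc _) v (r - j))
    _ = ∏ i ∈ range r, c i := by
        rw [prod_range_reflect c j, ← prod_Ico_eq_prod_range, prod_range_mul_prod_Ico c hj]

lemma SimpleGraph.Walk.support_mem_splitSupports {a b : V} (p : G.Walk a b)
    (step : ℕ → V → Finset V) {j : ℕ} (hj : j ≤ p.length)
    (hleft : ∀ i < j, p.getVert i ∈ step i (p.getVert (i + 1)))
    (hright : ∀ i, j ≤ i → i < p.length → p.getVert (i + 1) ∈ step i (p.getVert i)) :
    p.support ∈ splitSupports step (p.getVert j) p.length j := by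
  have hL := map_range_mem_stepChains (step := fun t => step (j - 1 - t))
    (f := fun t => p.getVert (j - t)) j fun t ht => by
      rw [show j - (t + 1) = j - 1 - t by omega, show j - t = j - 1 - t + 1 by omega]
      exact hleft _ (by omega)
  have hR := map_range_mem_stepChains (step := fun t => step (j + t))
    (f := fun t => p.getVert (j + t)) (p.length - j) fun t ht =>
      hright (j + t) (by omega) (by omega)
  rw [Nat.sub_zero] at hL
  rw [Nat.add_zero] at hR
  rw [p.support_eq_split hj]
  exact mem_image.2 ⟨(_, _), mem_product.2 ⟨hL, hR⟩, rfl⟩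

end SplitWalks

section OutSteps

/-- If `S` is the set of edges `x_i x_{i+1}` of a path `x_0, …, x_r` that point towards `x_0`,
then walking away from `x_j` crosses edge `i` along its orientation iff `i < j ↔ i ∈ S`. -/
def outSteps (S : Finset ℕ) (j r : ℕ) : ℕ := #{i ∈ range r | i < j ↔ i ∈ S}

def splitIndex (S : Finset ℕ) (r : ℕ) : ℕ :=
  if outSteps S (r - 1) r ≤ outSteps S 1 r then 1 else r - 1

def minOutSteps (r : ℕ) : ℕ := min r ((r + 1) / 2 + 1)

def orientationPatterns (r : ℕ) : Finset (Finset ℕ) := (Ico 1 (r - 1)).powerset.image (insert 0)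

variable {S : Finset ℕ} {r : ℕ}

lemma splitIndex_le (hr : 1 ≤ r) : splitIndex S r ≤ r := by
  unfold splitIndex; split_ifs <;> omega

lemma outSteps_splitIndex :
    outSteps S (splitIndex S r) r = max (outSteps S 1 r) (outSteps S (r - 1) r) := by
  unfold splitIndex; split_ifs <;> omega

lemma one_le_outSteps_one (hr : 1 ≤ r) (h0 : 0 ∈ S) : 1 ≤ outSteps S 1 r :=
  card_pos.2 ⟨0, mem_filter.2 ⟨mem_range.2 hr, iff_of_true one_pos h0⟩⟩

/-- Every edge is an out-step for `x_1` or for `x_{r-1}`, and the two end edges are for both. -/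
lemma add_two_le_outSteps_one_add_outSteps_pred (hr : 2 ≤ r) (h0 : 0 ∈ S) (hlast : r - 1 ∉ S) :
    r + 2 ≤ outSteps S 1 r + outSteps S (r - 1) r := by
  have hunion : {i ∈ range r | (i < 1 ↔ i ∈ S) ∨ (i < r - 1 ↔ i ∈ S)} = range r :=
    filter_true_of_mem fun i hi => by
      have := mem_range.1 hi
      by_cases hiS : i ∈ S
      · have : i ≠ r - 1 := fun h => hlast (h ▸ hiS)
        exact Or.inr (iff_of_true (by omega) hiS)
      · have : i ≠ 0 := fun h => hiS (h ▸ h0)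
        exact Or.inl (iff_of_false (by omega) hiS)
  have hinter : {0, r - 1} ⊆ {i ∈ range r | (i < 1 ↔ i ∈ S) ∧ (i < r - 1 ↔ i ∈ S)} := by
    intro i hi
    rcases mem_insert.1 hi with rfl | hi
    · simp [h0]; omega
    · rw [mem_singleton.1 hi]; simp [hlast]; omega
  have := card_le_card hinter
  rw [card_pair (by omega)] at this
  unfold outSteps
  rw [← card_union_add_card_inter, ← filter_or, ← filter_and, hunion, card_range]
  omega

lemma minOutSteps_le_outSteps_splitIndex (hr : 1 ≤ r) (h0 : 0 ∈ S) (hlast : 2 ≤ r → r - 1 ∉ S) :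
    minOutSteps r ≤ outSteps S (splitIndex S r) r := by
  rw [outSteps_splitIndex, minOutSteps]
  have := one_le_outSteps_one hr h0
  rcases eq_or_lt_of_le hr with rfl | hr2
  · omega
  · have := add_two_le_outSteps_one_add_outSteps_pred hr2 h0 (hlast hr2)
    omega

lemma card_orientationPatterns_le (r : ℕ) : #(orientationPatterns r) ≤ 2 ^ (r - 1) :=
  card_image_le.trans <| by
    rw [card_powerset, Nat.card_Ico]; exact Nat.pow_le_pow_right two_pos (by omega)

lemma zero_mem_of_mem_orientationPatterns (h : S ∈ orientationPatterns r) : 0 ∈ S := by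
  obtain ⟨T, -, rfl⟩ := mem_image.1 h
  exact mem_insert_self 0 T

lemma pred_notMem_of_mem_orientationPatterns (h : S ∈ orientationPatterns r) (hr : 2 ≤ r) :
    r - 1 ∉ S := by
  obtain ⟨T, hT, rfl⟩ := mem_image.1 h
  intro hmem
  rcases mem_insert.1 hmem with h | h
  · omega
  · have := mem_Ico.1 (mem_powerset.1 hT h); omega

end OutSteps

lemma prod_ite_le_pow_mul_pow {ι : Type*} (s : Finset ι) (O : ι → Prop) [DecidablePred O]
    {d Δ m : ℕ} (hdΔ : d ≤ Δ) (hm : m ≤ #{i ∈ s | O i}) :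
    ∏ i ∈ s, (if O i then d else Δ) ≤ d ^ m * Δ ^ (#s - m) := by
  rw [prod_ite, prod_const, prod_const]
  have hs : #{i ∈ s | ¬O i} = #s - #{i ∈ s | O i} := by
    exact (Nat.eq_sub_of_add_eq' (card_filter_add_card_filter_not O))
  have ha : #{i ∈ s | O i} ≤ #s := card_filter_le _ _
  rw [hs]
  generalize #{i ∈ s | O i} = a at hm ha ⊢
  calc d ^ a * Δ ^ (#s - a) = d ^ m * (d ^ (a - m) * Δ ^ (#s - a)) := by
        rw [← mul_assoc, ← pow_add, Nat.add_sub_cancel' hm]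
    _ ≤ d ^ m * (Δ ^ (a - m) * Δ ^ (#s - a)) := by gcongr
    _ = d ^ m * Δ ^ (#s - m) := by rw [← pow_add]; congr 2; omega

lemma pow_minOutSteps_mul_le {d Δ r ℓ : ℕ} (hd : 1 ≤ d) (hdΔ : d ≤ Δ) (hr : r ≤ ℓ) :
    d ^ minOutSteps r * Δ ^ (r - minOutSteps r) ≤ d ^ ((ℓ + 1) / 2 + 1) * Δ ^ (ℓ / 2 - 1) := by
  unfold minOutSteps
  exact Nat.mul_le_mul (Nat.pow_le_pow_right hd (by omega))
    (Nat.pow_le_pow_right (hd.trans hdΔ) (by omega))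

namespace SimpleGraph.Walk
variable {V : Type*} {A : V → V → Prop} {a b : V}

open Classical in
/-- The edges `x_i x_{i+1}` pointing towards `x_0`, except that the first edge always counts as
pointing towards `x_0` and the last one (for `r ≥ 2`) towards `x_r`, whatever `A` says. -/
noncomputable def orientationPattern (p : (fromRel A).Walk a b) : Finset ℕ :=
  insert 0 {i ∈ Ico 1 (p.length - 1) | A (p.getVert (i + 1)) (p.getVert i)}

noncomputable def splitVertex (p : (fromRel A).Walk a b) : V :=
  p.getVert (splitIndex p.orientationPattern p.length)

variable (p : (fromRel A).Walk a b)

lemma orientationPattern_mem_orientationPatterns :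
    p.orientationPattern ∈ orientationPatterns p.length := by
  classical
  exact mem_image_of_mem _ (mem_powerset.2 (filter_subset _ _))

lemma rel_of_mem_orientationPattern (hfirst : A (p.getVert 1) a) {i : ℕ}
    (hi : i ∈ p.orientationPattern) : A (p.getVert (i + 1)) (p.getVert i) := by
  classical
  rcases mem_insert.1 hi with rfl | hi
  · rwa [getVert_zero]
  · exact (mem_filter.1 hi).2

lemma rel_of_notMem_orientationPattern (hlast : A (p.getVert (p.length - 1)) b) {i : ℕ}
    (hi : i < p.length) (hiS : i ∉ p.orientationPattern) : A (p.getVert i) (p.getVert (i + 1)) := by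
  classical
  have hi0 : i ≠ 0 := fun h => hiS (h ▸ mem_insert_self _ _)
  rcases eq_or_ne (i + 1) p.length with hr | hr
  · rwa [hr, getVert_length, show i = p.length - 1 by omega]
  · have hnot : ¬A (p.getVert (i + 1)) (p.getVert i) := fun h =>
      hiS (mem_insert_of_mem (mem_filter.2 ⟨mem_Ico.2 ⟨by omega, by omega⟩, h⟩))
    exact ((fromRel_adj _ _ _).1 (p.adj_getVert_succ hi)).2.resolve_right hnot

end SimpleGraph.Walk

section Counting
variable {V : Type*} [DecidableEq V]

def crossStep (out nbr : V → Finset V) (S : Finset ℕ) (j i : ℕ) (x : V) : Finset V :=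
  if i < j ↔ i ∈ S then out x else nbr x

noncomputable def splitSupportsUpTo (out nbr : V → Finset V) (v : V) (ℓ : ℕ) : Finset (List V) :=
  (range ℓ).biUnion fun k => (orientationPatterns (k + 1)).biUnion fun S =>
    splitSupports (crossStep out nbr S (splitIndex S (k + 1))) v (k + 1) (splitIndex S (k + 1))

lemma card_splitSupports_crossStep_le {out nbr : V → Finset V} {d Δ : ℕ}
    (hout : ∀ x, #(out x) ≤ d) (hnbr : ∀ x, #(nbr x) ≤ Δ) (hdΔ : d ≤ Δ) {S : Finset ℕ} {r : ℕ}
    (hr : 1 ≤ r) (hS : S ∈ orientationPatterns r) (v : V) :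
    #(splitSupports (crossStep out nbr S (splitIndex S r)) v r (splitIndex S r)) ≤
      d ^ minOutSteps r * Δ ^ (r - minOutSteps r) := by
  have hcost : ∀ i x, #(crossStep out nbr S (splitIndex S r) i x) ≤
      if i < splitIndex S r ↔ i ∈ S then d else Δ :=
    fun i x => by unfold crossStep; split_ifs; exacts [hout x, hnbr x]
  calc _ ≤ ∏ i ∈ range r, if i < splitIndex S r ↔ i ∈ S then d else Δ :=
        card_splitSupports_le _ _ hcost v (splitIndex_le hr)
    _ ≤ _ := by
        simpa using prod_ite_le_pow_mul_pow (range r) _ hdΔ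
          (minOutSteps_le_outSteps_splitIndex hr (zero_mem_of_mem_orientationPatterns hS)
            (pred_notMem_of_mem_orientationPatterns hS))

lemma card_splitSupportsUpTo_le {out nbr : V → Finset V} {d Δ : ℕ}
    (hout : ∀ x, #(out x) ≤ d) (hnbr : ∀ x, #(nbr x) ≤ Δ) (hd : 1 ≤ d) (hdΔ : d ≤ Δ)
    (v : V) (ℓ : ℕ) :
    #(splitSupportsUpTo out nbr v ℓ) ≤ 2 ^ ℓ * d ^ ((ℓ + 1) / 2 + 1) * Δ ^ (ℓ / 2 - 1) := by
  set B := d ^ ((ℓ + 1) / 2 + 1) * Δ ^ (ℓ / 2 - 1)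
  have hsplit : ∀ k ∈ range ℓ, ∀ S ∈ orientationPatterns (k + 1),
      #(splitSupports (crossStep out nbr S (splitIndex S (k + 1))) v (k + 1)
        (splitIndex S (k + 1))) ≤ B := fun k hk S hS =>
    (card_splitSupports_crossStep_le hout hnbr hdΔ k.succ_pos hS v).trans
      (pow_minOutSteps_mul_le hd hdΔ (mem_range.1 hk))
  calc _ ≤ ∑ k ∈ range ℓ, ∑ S ∈ orientationPatterns (k + 1), B :=
        card_biUnion_le.trans (sum_le_sum fun k hk => card_biUnion_le.trans
          (sum_le_sum (hsplit k hk)))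
    _ ≤ ∑ k ∈ range ℓ, 2 ^ k * B := sum_le_sum fun k _ => by
        rw [sum_const, smul_eq_mul]
        exact Nat.mul_le_mul_right _ (card_orientationPatterns_le (k + 1))
    _ ≤ 2 ^ ℓ * B := by
        rw [← sum_mul]
        exact Nat.mul_le_mul_right _ (Nat.geomSum_lt le_rfl fun k hk => mem_range.1 hk).le
    _ = _ := (mul_assoc _ _ _).symm

lemma SimpleGraph.Walk.support_mem_splitSupportsUpTo {A : V → V → Prop} {a b : V}
    (p : (SimpleGraph.fromRel A).Walk a b) {ℓ : ℕ} (hpos : 1 ≤ p.length) (hle : p.length ≤ ℓ)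
    (hfirst : A (p.getVert 1) a) (hlast : A (p.getVert (p.length - 1)) b)
    (out nbr : V → Finset V) (hout : ∀ x w, A x w → w ∈ out x)
    (hnbr : ∀ x w, (SimpleGraph.fromRel A).Adj x w → w ∈ nbr x) :
    p.support ∈ splitSupportsUpTo out nbr p.splitVertex ℓ := by
  have hj := splitIndex_le (S := p.orientationPattern) hpos
  refine mem_biUnion.2 ⟨p.length - 1, mem_range.2 (by omega), mem_biUnion.2
    ⟨p.orientationPattern, ?_, ?_⟩⟩ <;> rw [Nat.sub_add_cancel hpos]
  · exact p.orientationPattern_mem_orientationPatterns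
  refine p.support_mem_splitSupports _ hj (fun i hi => ?_) (fun i hji hi => ?_) <;>
    unfold crossStep <;> by_cases hiS : i ∈ p.orientationPattern
  · rw [if_pos (iff_of_true hi hiS)]
    exact hout _ _ (p.rel_of_mem_orientationPattern hfirst hiS)
  · rw [if_neg fun h => hiS (h.1 hi)]
    exact hnbr _ _ (p.adj_getVert_succ (by omega)).symm
  · rw [if_neg fun h => absurd (h.2 hiS) (by omega)]
    exact hnbr _ _ (p.adj_getVert_succ hi)
  · rw [if_pos (iff_of_false (by omega) hiS)]
    exact hout _ _ (p.rel_of_notMem_orientationPattern hlast hi hiS)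

end Counting

section UndirectedWalks
variable {V : Type*} {G : SimpleGraph V}

lemma WalkSig.ext_support {q q' : WalkSig G}
    (h : q.2.2.support = q'.2.2.support) : q = q' := by
  obtain ⟨a, b, p⟩ := q
  obtain ⟨a', b', p'⟩ := q'
  simp only at h
  obtain rfl : a = a' := by rw [← p.head_support, ← p'.head_support]; simp only [h]
  obtain rfl : b = b' := by rw [← p.getLast_support, ← p'.getLast_support]; simp only [h]
  rw [SimpleGraph.Walk.ext_support h]

lemma WalkSig.mem_support_rev {q : WalkSig G} {x : V} :
    x ∈ q.rev.2.2.support ↔ x ∈ q.2.2.support := by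
  simp [WalkSig.rev]

lemma WalkSig.mem_support_out_mk {q : WalkSig G} {x : V} :
    x ∈ (Quotient.out (Quotient.mk (walkSetoid G) q)).2.2.support ↔ x ∈ q.2.2.support := by
  rcases Quotient.mk_out (s := walkSetoid G) q with h | h
  · rw [← h]
  · conv_rhs => rw [h]
    exact WalkSig.mem_support_rev.symm

variable {A : V → V → Prop}

lemma splitVertex_out_mk_mem (q : WalkSig (SimpleGraph.fromRel A)) :
    (Quotient.out (Quotient.mk (walkSetoid _) q)).2.2.splitVertex ∈ q.2.2.support :=
  WalkSig.mem_support_out_mk.1 (SimpleGraph.Walk.getVert_mem_support _ _)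

lemma PhatCond.rev {ℓ : ℕ} {q : WalkSig (SimpleGraph.fromRel A)} (h : PhatCond A ℓ q) :
    PhatCond A ℓ q.rev := by
  obtain ⟨⟨hp, h1, h2⟩, hfirst, hlast⟩ := h
  obtain ⟨a, b, p⟩ := q
  refine ⟨⟨hp.reverse, by simpa [WalkSig.rev] using h1, by simpa [WalkSig.rev] using h2⟩, ?_, ?_⟩
  · simpa [WalkSig.rev, SimpleGraph.Walk.getVert_reverse] using hlast
  · have : p.length - (p.length - 1) = 1 := by simp at h1; omega
    simpa [WalkSig.rev, SimpleGraph.Walk.getVert_reverse, this] using hfirst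

lemma phatCond_out {ℓ : ℕ} {P : UWalk (SimpleGraph.fromRel A)} (hP : P ∈ PhatPaths A ℓ) :
    PhatCond A ℓ (Quotient.out P) := by
  obtain ⟨q, rfl, hq⟩ := hP
  rcases Quotient.mk_out (s := walkSetoid _) q with h | h
  · rwa [← h]
  · rw [← WalkSig.rev_rev (Quotient.out _), ← h]
    exact hq.rev

end UndirectedWalks

theorem stmt9_general {V : Type*} (A : V → V → Prop) (d ℓ Δ : ℕ)
    (hd : 2 ≤ d) (hΔ : d ≤ Δ)
    (hmax : ∀ v, ((SimpleGraph.fromRel A).neighborSet v).Finite ∧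
        ((SimpleGraph.fromRel A).neighborSet v).ncard ≤ Δ)
    (hout : ∀ v, {w | A v w}.Finite ∧ {w | A v w}.ncard ≤ d) :
    ∃ γ : UWalk (SimpleGraph.fromRel A) → V,
      (∀ q : WalkSig (SimpleGraph.fromRel A), PhatCond A ℓ q →
          γ (Quotient.mk (walkSetoid (SimpleGraph.fromRel A)) q) ∈ q.2.2.support) ∧
      ∀ v : V,
        {P ∈ PhatPaths A ℓ | γ P = v}.Finite ∧
        {P ∈ PhatPaths A ℓ | γ P = v}.ncard ≤
          2 ^ ℓ * d ^ ((ℓ + 1) / 2 + 1) * Δ ^ (ℓ / 2 - 1) := by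
  classical
  let out : V → Finset V := fun x => (hout x).1.toFinset
  let nbr : V → Finset V := fun x => (hmax x).1.toFinset
  have hcard_out : ∀ x, #(out x) ≤ d :=
    fun x => (Set.ncard_eq_toFinset_card _ _).symm.trans_le (hout x).2
  have hcard_nbr : ∀ x, #(nbr x) ≤ Δ :=
    fun x => (Set.ncard_eq_toFinset_card _ _).symm.trans_le (hmax x).2
  refine ⟨fun P => (Quotient.out P).2.2.splitVertex, fun q _ => splitVertex_out_mk_mem q,
    fun v => ?_⟩
  have hmaps : Set.MapsTo (fun P : UWalk (SimpleGraph.fromRel A) => (Quotient.out P).2.2.support)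
      {P ∈ PhatPaths A ℓ | (Quotient.out P).2.2.splitVertex = v}
      (splitSupportsUpTo out nbr v ℓ) := by
    rintro P ⟨hP, rfl⟩
    obtain ⟨⟨-, hpos, hle⟩, hfirst, hlast⟩ := phatCond_out hP
    exact SimpleGraph.Walk.support_mem_splitSupportsUpTo _ hpos hle hfirst hlast out nbr
      (fun x _ h => (hout x).1.mem_toFinset.2 h) (fun x _ h => (hmax x).1.mem_toFinset.2 h)
  have hinj : Set.InjOn (fun P : UWalk (SimpleGraph.fromRel A) => (Quotient.out P).2.2.support)
      {P ∈ PhatPaths A ℓ | (Quotient.out P).2.2.splitVertex = v} :=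
    fun P _ Q _ h => Quotient.out_injective (WalkSig.ext_support h)
  refine ⟨Set.Finite.of_injOn hmaps hinj (finite_toSet _),
    (Set.ncard_le_ncard_of_injOn _ hmaps hinj).trans ?_⟩
  rw [Set.ncard_coe_finset]
  exact card_splitSupportsUpTo_le hcard_out hcard_nbr (by omega) hΔ v ℓ

/-- For d ≥ 2, ℓ ≥ 3, Δ ≥ d and a directed graph G' (edge relation `A`) whose underlying
undirected graph has maximum degree at most Δ and whose out-degrees are at most d, there is
a map γ : P̂_ℓ(G') → V(G') with γ(Π) a vertex of Π, such that each vertex is the image of at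
most 2^ℓ·d^(⌈ℓ/2⌉+1)·Δ^(⌊ℓ/2⌋−1) paths of P̂_ℓ(G'). -/
theorem stmt9 {V : Type*} (A : V → V → Prop) (d ℓ Δ : ℕ)
    (hd : 2 ≤ d) (hℓ : 3 ≤ ℓ) (hΔ : d ≤ Δ)
    (hirr : ∀ v, ¬ A v v)
    (hmax : ∀ v, ((SimpleGraph.fromRel A).neighborSet v).Finite ∧
        ((SimpleGraph.fromRel A).neighborSet v).ncard ≤ Δ)
    (hout : ∀ v, {w | A v w}.Finite ∧ {w | A v w}.ncard ≤ d) :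
    ∃ γ : UWalk (SimpleGraph.fromRel A) → V,
      (∀ q : WalkSig (SimpleGraph.fromRel A), PhatCond A ℓ q →
          γ (Quotient.mk (walkSetoid (SimpleGraph.fromRel A)) q) ∈ q.2.2.support) ∧
      ∀ v : V,
        {P ∈ PhatPaths A ℓ | γ P = v}.Finite ∧
        {P ∈ PhatPaths A ℓ | γ P = v}.ncard ≤
          2 ^ ℓ * d ^ ((ℓ + 1) / 2 + 1) * Δ ^ (ℓ / 2 - 1) :=
  stmt9_general A d ℓ Δ hd hΔ hmax hout
end

section
/- For any integers d ≥ 1, ℓ ≥ 2, Δ ≥ d and any d-degenerate graph G of maximum degree at most Δ, the ℓ-th power graph G^ℓ has an orientation in which every vertex has out-degree at most 2^{ℓ+1}·d^{⌈ℓ/2⌉}·Δ^{⌊ℓ/2⌋}. -/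
/-- The power graph `G^ℓ`: two distinct vertices are adjacent iff some path of `G` with at
most `ℓ` edges contains both of them. -/
def powerGraph {V : Type*} (G : SimpleGraph V) (ℓ : ℕ) : SimpleGraph V where
  Adj v w := v ≠ w ∧ ∃ (a b : V) (p : G.Walk a b),
    p.IsPath ∧ p.length ≤ ℓ ∧ v ∈ p.support ∧ w ∈ p.support
  symm := by
    constructor
    rintro v w ⟨hne, a, b, p, hp, hl, hv, hw⟩
    exact ⟨hne.symm, a, b, p, hp, hl, hw, hv⟩
  loopless := by
    constructor
    rintro v ⟨hne, -⟩
    exact hne rfl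

/-!
Rank the vertices by a degeneracy ordering, so that every vertex has at most `d` neighbours
above it and at most `Δ` below it. A walk of length `k` whose steps follow a prescribed
up/down pattern with `j` down-steps ends in at most `d ^ (k - j) * Δ ^ j` vertices, and there
are at most `2 ^ k` patterns of length `k`. Two vertices adjacent in `G ^ ℓ` are joined by a
walk of length at most `ℓ`; the descents of a walk are the ascents of its reverse, so the walk
or its reverse has at most `ℓ / 2` descents. Orienting each edge of `G ^ ℓ` along such a walk,
the out-neighbours of `v` are endpoints of walks from `v` of length at most `ℓ` with at most
`ℓ / 2` descents, which gives the bound.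
-/

lemma Set.ncard_biUnion_le_ncard_mul {ι α : Type*} {s : Set ι} (hs : s.Finite)
    {t : ι → Set α} {m : ℕ} (h : ∀ i ∈ s, (t i).ncard ≤ m) :
    (⋃ i ∈ s, t i).ncard ≤ s.ncard * m := by
  have hsum := hs.toFinset.set_ncard_biUnion_le t
  simp only [Set.Finite.mem_toFinset] at hsum
  rw [Set.ncard_eq_toFinset_card s hs, ← smul_eq_mul]
  exact hsum.trans (Finset.sum_le_card_nsmul _ _ _ fun i hi => h i (by simpa using hi))

lemma Nat.pow_mul_pow_le_pow_mul_pow {a b i j m n : ℕ} (ha : 1 ≤ a) (hab : a ≤ b)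
    (hjn : j ≤ n) (hij : i + j ≤ m + n) : a ^ i * b ^ j ≤ a ^ m * b ^ n :=
  calc a ^ i * b ^ j ≤ a ^ (m + (n - j)) * b ^ j :=
        Nat.mul_le_mul_right _ (Nat.pow_le_pow_right ha (by omega))
    _ = a ^ m * a ^ (n - j) * b ^ j := by rw [pow_add]
    _ ≤ a ^ m * b ^ (n - j) * b ^ j := by gcongr
    _ = a ^ m * b ^ n := by rw [mul_assoc, ← pow_add, Nat.sub_add_cancel hjn]

lemma IsDegenerate.exists_rank {V : Type*} [Finite V] {G : SimpleGraph V} {d : ℕ}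
    (h : IsDegenerate G d) :
    ∃ r : V → ℕ, Function.Injective r ∧ ∀ v, {w | G.Adj v w ∧ r v < r w}.ncard ≤ d := by
  suffices key : ∀ s : Finset V, ∃ r : V → ℕ, Function.Injective r ∧
      ∀ v ∈ s, {w | w ∈ s ∧ G.Adj v w ∧ r v < r w}.ncard ≤ d by
    have := Fintype.ofFinite V
    obtain ⟨r, hr, hup⟩ := key Finset.univ
    exact ⟨r, hr, fun v => by simpa using hup v (Finset.mem_univ v)⟩
  classical
  intro s
  induction s using Finset.strongInduction with
  | H s ih =>
    rcases s.eq_empty_or_nonempty with rfl | hs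
    · obtain ⟨r, hr⟩ := exists_injective_nat V
      exact ⟨r, hr, by simp⟩
    obtain ⟨v, hv, hfin, hcard⟩ := h s (by simpa using hs)
    obtain ⟨r, hr, hup⟩ := ih (s.erase v) (Finset.erase_ssubset hv)
    -- `v` gets the lowest rank, so all its neighbours in `s` lie above it
    refine ⟨fun w => if w = v then 0 else r w + 1, fun x y hxy => ?_, fun u hu => ?_⟩
    · dsimp only at hxy
      split_ifs at hxy with hx hy hy
      · exact hx.trans hy.symm
      · exact hr (Nat.succ_injective hxy)
    by_cases huv : u = v
    · subst huv
      refine (Set.ncard_le_ncard (fun w hw => ?_) hfin).trans hcard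
      exact ⟨hw.1, hw.2.1⟩
    · refine (Set.ncard_le_ncard (fun w hw => ?_) (Set.toFinite _)).trans
        (hup u (Finset.mem_erase.2 ⟨huv, hu⟩))
      obtain ⟨hws, hadj, hlt⟩ := hw
      have hwv : w ≠ v := by rintro rfl; simp at hlt
      simp only [huv, hwv, if_false] at hlt
      exact ⟨Finset.mem_erase.2 ⟨hwv, hws⟩, hadj, by omega⟩

namespace SimpleGraph

variable {V : Type*} {G : SimpleGraph V}

lemma Walk.exists_walk_length_le_of_mem_support {a b v w : V} (p : G.Walk a b)
    (hv : v ∈ p.support) (hw : w ∈ p.support) : ∃ q : G.Walk v w, q.length ≤ p.length := by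
  classical
  by_cases hv' : v ∈ (p.takeUntil w hw).support
  · exact ⟨(p.takeUntil w hw).dropUntil v hv',
      ((p.takeUntil w hw).length_dropUntil_le_length hv').trans
        (p.length_takeUntil_le_length hw)⟩
  · have hv'' : v ∈ (p.dropUntil w hw).support := by
      rw [← p.take_spec hw, Walk.mem_support_append_iff] at hv
      exact hv.resolve_left hv'
    refine ⟨((p.dropUntil w hw).takeUntil v hv'').reverse, ?_⟩
    rw [Walk.length_reverse]
    exact ((p.dropUntil w hw).length_takeUntil_le_length hv'').trans
      (p.length_dropUntil_le_length hw)

lemma exists_walk_length_le_of_powerGraph_adj {ℓ : ℕ} {v w : V}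
    (h : (powerGraph G ℓ).Adj v w) : ∃ q : G.Walk v w, q.length ≤ ℓ := by
  obtain ⟨-, a, b, p, -, hl, hv, hw⟩ := h
  obtain ⟨q, hq⟩ := p.exists_walk_length_le_of_mem_support hv hw
  exact ⟨q, hq.trans hl⟩

lemma exists_orientation_of_adj_imp_or (H : SimpleGraph V) {P : V → V → Prop}
    (hP : ∀ v w, H.Adj v w → P v w ∨ P w v) :
    ∃ o : V → V → Prop, (∀ v w, o v w → H.Adj v w ∧ P v w) ∧
      (∀ v w, H.Adj v w → (o v w ↔ ¬ o w v)) := by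
  have : IsWellOrder V WellOrderingRel := WellOrderingRel.isWellOrder
  refine ⟨fun v w => H.Adj v w ∧ P v w ∧ (P w v → WellOrderingRel v w),
    fun v w h => ⟨h.1, h.2.1⟩, fun v w hvw => ?_⟩
  have htri := trichotomous_of WellOrderingRel v w
  have hasymm : WellOrderingRel v w → ¬ WellOrderingRel w v := asymm_of _
  have hPvw := hP v w hvw
  have hne := hvw.ne
  have hwv := hvw.symm
  tauto

def Walk.descentPattern {α : Type*} [LinearOrder α] (r : V → α) {u v : V} (p : G.Walk u v) :
    List Bool :=
  p.darts.map fun e => decide (r e.snd < r e.fst)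

section Descents

variable {α : Type*} [LinearOrder α] {r : V → α}

namespace Walk

@[simp] lemma descentPattern_nil {u : V} : (nil : G.Walk u u).descentPattern r = [] := rfl

@[simp] lemma descentPattern_cons {u v w : V} (h : G.Adj u v) (p : G.Walk v w) :
    (cons h p).descentPattern r = decide (r v < r u) :: p.descentPattern r := rfl

@[simp] lemma length_descentPattern {u v : V} (p : G.Walk u v) :
    (p.descentPattern r).length = p.length := by
  simp [descentPattern]

lemma count_true_descentPattern_reverse (hr : Function.Injective r) {u v : V}
    (p : G.Walk u v) :
    (p.reverse.descentPattern r).count true = (p.descentPattern r).count false := by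
  simp only [descentPattern, darts_reverse, List.map_reverse, List.map_map, List.count_reverse]
  rw [List.count_eq_countP, List.count_eq_countP, List.countP_map, List.countP_map]
  refine List.countP_congr fun e _ => ?_
  have := hr.ne e.adj.ne
  simp [this.le_iff_lt]

end Walk

lemma ncard_setOf_walk_descentPattern_le [Finite V] (hr : Function.Injective r) {a b : ℕ}
    (hup : ∀ v, {w | G.Adj v w ∧ r v < r w}.ncard ≤ a)
    (hdown : ∀ v, {w | G.Adj v w ∧ r w < r v}.ncard ≤ b) (σ : List Bool) (v : V) :
    {w | ∃ p : G.Walk v w, p.descentPattern r = σ}.ncard ≤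
      a ^ σ.count false * b ^ σ.count true := by
  induction σ generalizing v with
  | nil =>
    refine (Set.ncard_le_ncard (t := {v}) ?_ (Set.toFinite _)).trans (by simp)
    rintro w ⟨p, hp⟩
    have := p.eq_of_length_eq_zero (by simpa using congrArg List.length hp)
    simp [this]
  | cons β σ ih =>
    have hsub : {w | ∃ p : G.Walk v w, p.descentPattern r = β :: σ} ⊆
        ⋃ u ∈ {u | G.Adj v u ∧ decide (r u < r v) = β},
          {w | ∃ p : G.Walk u w, p.descentPattern r = σ} := by
      rintro w ⟨_ | ⟨h, p⟩, hp⟩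
      · simp at hp
      · simp only [Walk.descentPattern_cons, List.cons.injEq] at hp
        exact Set.mem_biUnion ⟨h, hp.1⟩ ⟨p, hp.2⟩
    have hβ : {u | G.Adj v u ∧ decide (r u < r v) = β}.ncard ≤ if β then b else a := by
      cases β
      · refine (Set.ncard_le_ncard ?_ (Set.toFinite _)).trans (hup v)
        rintro u ⟨h, hvu⟩
        exact ⟨h, lt_of_le_of_ne (by simpa using hvu) (hr.ne h.ne)⟩
      · simpa using hdown v
    calc _ ≤ _ := Set.ncard_le_ncard hsub (Set.toFinite _)
      _ ≤ _ := Set.ncard_biUnion_le_ncard_mul (Set.toFinite _) fun u _ => ih u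
      _ ≤ (if β then b else a) * (a ^ σ.count false * b ^ σ.count true) :=
        Nat.mul_le_mul_right _ hβ
      _ = _ := by cases β <;> simp [pow_succ] <;> ring

lemma ncard_setOf_walk_length_le_count_descent_le [Finite V] (hr : Function.Injective r)
    {a b : ℕ} (ha : 1 ≤ a) (hab : a ≤ b)
    (hup : ∀ v, {w | G.Adj v w ∧ r v < r w}.ncard ≤ a)
    (hdown : ∀ v, {w | G.Adj v w ∧ r w < r v}.ncard ≤ b) {ℓ m : ℕ} (hm : m ≤ ℓ) (v : V) :
    {w | ∃ p : G.Walk v w, p.length ≤ ℓ ∧ (p.descentPattern r).count true ≤ m}.ncard ≤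
      2 ^ (ℓ + 1) * (a ^ (ℓ - m) * b ^ m) := by
  let Pattern (k : ℕ) := {σ : List.Vector Bool k // σ.1.count true ≤ m}
  let reach (σ : List Bool) := {w | ∃ p : G.Walk v w, p.descentPattern r = σ}
  have hcover : {w | ∃ p : G.Walk v w, p.length ≤ ℓ ∧ (p.descentPattern r).count true ≤ m} ⊆
      ⋃ (k : Fin (ℓ + 1)) (σ : Pattern k), reach σ.1.1 := by
    rintro w ⟨p, hl, hc⟩
    simp only [Set.mem_iUnion]
    exact ⟨⟨p.length, by omega⟩, ⟨⟨p.descentPattern r, by simp⟩, hc⟩, p, rfl⟩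
  have hreach (k : Fin (ℓ + 1)) (σ : Pattern k) : (reach σ.1.1).ncard ≤ a ^ (ℓ - m) * b ^ m := by
    refine (ncard_setOf_walk_descentPattern_le hr hup hdown _ v).trans
      (Nat.pow_mul_pow_le_pow_mul_pow ha hab σ.2 ?_)
    rw [List.count_false_add_count_true, σ.1.2]
    omega
  have hcard (k : ℕ) : Fintype.card (Pattern k) ≤ 2 ^ k :=
    (Fintype.card_subtype_le _).trans (by simp [card_vector])
  calc _ ≤ (⋃ (k : Fin (ℓ + 1)) (σ : Pattern k), reach σ.1.1).ncard :=
        Set.ncard_le_ncard hcover (Set.toFinite _)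
    _ ≤ ∑ k : Fin (ℓ + 1), ∑ σ : Pattern k, (reach σ.1.1).ncard :=
        (Set.ncard_iUnion_le_of_fintype _).trans
          (Finset.sum_le_sum fun k _ => Set.ncard_iUnion_le_of_fintype _)
    _ ≤ ∑ k : Fin (ℓ + 1), 2 ^ (k : ℕ) * (a ^ (ℓ - m) * b ^ m) := by
        refine Finset.sum_le_sum fun k _ => ?_
        refine (Finset.sum_le_card_nsmul _ _ _ fun σ _ => hreach k σ).trans ?_
        rw [Finset.card_univ, smul_eq_mul]
        exact Nat.mul_le_mul_right _ (hcard k)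
    _ ≤ 2 ^ (ℓ + 1) * (a ^ (ℓ - m) * b ^ m) := by
        rw [← Finset.sum_mul, Fin.sum_univ_eq_sum_range (2 ^ ·)]
        exact Nat.mul_le_mul_right _ (Nat.geomSum_lt le_rfl (by simp)).le

end Descents

end SimpleGraph

theorem stmt10_general {V : Type*} [Fintype V] (G : SimpleGraph V) (d ℓ Δ : ℕ)
    (hd : 1 ≤ d) (hΔ : d ≤ Δ)
    (hdeg : IsDegenerate G d) (hmax : MaxDegreeLE G Δ) :
    ∃ o : V → V → Prop,
      (∀ v w, o v w → (powerGraph G ℓ).Adj v w) ∧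
      (∀ v w, (powerGraph G ℓ).Adj v w → (o v w ↔ ¬ o w v)) ∧
      (∀ v, {w | o v w}.ncard ≤ 2 ^ (ℓ + 1) * d ^ ((ℓ + 1) / 2) * Δ ^ (ℓ / 2)) := by
  obtain ⟨r, hr, hup⟩ := hdeg.exists_rank
  have hdown (v : V) : {w | G.Adj v w ∧ r w < r v}.ncard ≤ Δ :=
    (Set.ncard_le_ncard (fun _ hw => hw.1) (hmax v).1).trans (hmax v).2
  let P (v w : V) := ∃ q : G.Walk v w, q.length ≤ ℓ ∧ (q.descentPattern r).count true ≤ ℓ / 2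
  have hP (v w : V) (h : (powerGraph G ℓ).Adj v w) : P v w ∨ P w v := by
    obtain ⟨q, hq⟩ := G.exists_walk_length_le_of_powerGraph_adj h
    have hrev := q.count_true_descentPattern_reverse hr
    have hsum := List.count_true_add_count_false (q.descentPattern r)
    rw [q.length_descentPattern] at hsum
    by_cases hc : (q.descentPattern r).count true ≤ ℓ / 2
    · exact Or.inl ⟨q, hq, hc⟩
    · exact Or.inr ⟨q.reverse, by rwa [SimpleGraph.Walk.length_reverse], by omega⟩
  obtain ⟨o, hoP, ho⟩ := (powerGraph G ℓ).exists_orientation_of_adj_imp_or hP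
  refine ⟨o, fun v w h => (hoP v w h).1, ho, fun v => ?_⟩
  calc {w | o v w}.ncard ≤ {w | P v w}.ncard :=
        Set.ncard_le_ncard (fun w h => (hoP v w h).2) (Set.toFinite _)
    _ ≤ 2 ^ (ℓ + 1) * (d ^ (ℓ - ℓ / 2) * Δ ^ (ℓ / 2)) :=
        SimpleGraph.ncard_setOf_walk_length_le_count_descent_le hr hd hΔ hup hdown
          (Nat.div_le_self ℓ 2) v
    _ = 2 ^ (ℓ + 1) * d ^ ((ℓ + 1) / 2) * Δ ^ (ℓ / 2) := by
        rw [show ℓ - ℓ / 2 = (ℓ + 1) / 2 by omega, mul_assoc]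

/-- For d ≥ 1, ℓ ≥ 2, Δ ≥ d and a d-degenerate graph G of maximum degree at most Δ, the
power graph G^ℓ has an orientation in which every vertex has out-degree at most
2^(ℓ+1)·d^⌈ℓ/2⌉·Δ^⌊ℓ/2⌋. -/
theorem stmt10 {V : Type*} [Fintype V] (G : SimpleGraph V) (d ℓ Δ : ℕ)
    (hd : 1 ≤ d) (hℓ : 2 ≤ ℓ) (hΔ : d ≤ Δ)
    (hdeg : IsDegenerate G d) (hmax : MaxDegreeLE G Δ) :
    ∃ o : V → V → Prop,
      (∀ v w, o v w → (powerGraph G ℓ).Adj v w) ∧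
      (∀ v w, (powerGraph G ℓ).Adj v w → (o v w ↔ ¬ o w v)) ∧
      (∀ v, {w | o v w}.ncard ≤ 2 ^ (ℓ + 1) * d ^ ((ℓ + 1) / 2) * Δ ^ (ℓ / 2)) :=
  stmt10_general G d ℓ Δ hd hΔ hdeg hmax
end

section
/- Let d be a positive integer and let G be an n-vertex d-degenerate graph. Define S₀ := V(G) and, for each integer i ≥ 1, S_i := {v ∈ S_{i−1} : deg_{G[S_{i−1}]}(v) ≥ 4d}. Then |S_i| ≤ n/2^i for every integer i ≥ 0; in particular, S_i is empty for every i > log₂ n. -/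
open Finset in
lemma sum_deg_le {V : Type*} [DecidableEq V] (G : SimpleGraph V) [DecidableRel G.Adj]
    (d : ℕ) (hG : IsDegenerate G d) :
    ∀ s : Finset V, ∑ v ∈ s, ({u ∈ s | G.Adj v u}).card ≤ 2 * d * s.card := by
  intro s
  induction s using Finset.strongInduction with
  | _ s ih =>
    rcases s.eq_empty_or_nonempty with rfl | hne
    · simp
    obtain ⟨v, hv, -, hdeg⟩ := hG ↑s (by exact_mod_cast hne)
    have hv' : v ∈ s := Finset.mem_coe.mp hv
    have hcoe : ((s : Set V) ∩ G.neighborSet v) = ↑({u ∈ s | G.Adj v u}) := by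
      ext u; simp [SimpleGraph.mem_neighborSet, and_comm]
    rw [hcoe, Set.ncard_coe_finset] at hdeg
    set t := s.erase v with ht
    have hts : t ⊂ s := Finset.erase_ssubset hv'
    have hins : s = insert v t := by simp [ht, Finset.insert_erase hv']
    have key : ∀ u ∈ t, ({w ∈ s | G.Adj u w}).card
        = ({w ∈ t | G.Adj u w}).card + (if G.Adj u v then 1 else 0) := by
      intro u hu
      rw [hins, Finset.filter_insert]
      split_ifs with h
      · rw [Finset.card_insert_of_notMem (by simp [ht])]
      · simp
    have hvfilter : ({w ∈ s | G.Adj v w}) = ({w ∈ t | G.Adj v w}) := by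
      rw [hins, Finset.filter_insert, if_neg (G.irrefl)]
    have hsplit : ∑ u ∈ s, ({w ∈ s | G.Adj u w}).card
        = ({w ∈ s | G.Adj v w}).card + ∑ u ∈ t, ({w ∈ s | G.Adj u w}).card := by
      rw [hins, Finset.sum_insert (by simp [ht])]
    have hcount : ∑ u ∈ t, (if G.Adj u v then 1 else 0)
        = ({w ∈ t | G.Adj v w}).card := by
      rw [Finset.card_filter]
      exact Finset.sum_congr rfl (fun u hu => by simp [G.adj_comm])
    calc ∑ u ∈ s, ({w ∈ s | G.Adj u w}).card
        = ({w ∈ s | G.Adj v w}).card + ∑ u ∈ t, ({w ∈ s | G.Adj u w}).card := hsplit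
      _ = ({w ∈ s | G.Adj v w}).card + (∑ u ∈ t, ({w ∈ t | G.Adj u w}).card
            + ∑ u ∈ t, (if G.Adj u v then 1 else 0)) := by
            rw [← Finset.sum_add_distrib]; rw [Finset.sum_congr rfl key]
      _ = 2 * ({w ∈ s | G.Adj v w}).card + ∑ u ∈ t, ({w ∈ t | G.Adj u w}).card := by
            rw [hcount, ← hvfilter]; ring
      _ ≤ 2 * d + 2 * d * t.card := by
            have := ih t hts
            omega
      _ ≤ 2 * d * s.card := by
            have : t.card + 1 = s.card := Finset.card_erase_add_one hv'
            nlinarith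

open Finset in
lemma half_le {V : Type*} [DecidableEq V] (G : SimpleGraph V) [DecidableRel G.Adj]
    (d : ℕ) (hd : 0 < d) (hG : IsDegenerate G d) (s : Finset V) :
    2 * ({v ∈ s | 4 * d ≤ ({u ∈ s | G.Adj v u}).card}).card ≤ s.card := by
  set T := {v ∈ s | 4 * d ≤ ({u ∈ s | G.Adj v u}).card} with hT
  have h1 : 4 * d * T.card ≤ ∑ v ∈ T, ({u ∈ s | G.Adj v u}).card := by
    calc 4 * d * T.card = ∑ _v ∈ T, 4 * d := by
          rw [Finset.sum_const, smul_eq_mul, mul_comm]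
      _ ≤ _ := Finset.sum_le_sum (fun v hv => (Finset.mem_filter.mp hv).2)
  have h2 : ∑ v ∈ T, ({u ∈ s | G.Adj v u}).card ≤ ∑ v ∈ s, ({u ∈ s | G.Adj v u}).card :=
    Finset.sum_le_sum_of_subset (Finset.filter_subset _ _)
  have h3 := sum_deg_le G d hG s
  nlinarith

/-- For an n-vertex d-degenerate graph G, with S₀ = V(G) and
S_{i+1} = {v ∈ S_i : deg_{G[S_i]}(v) ≥ 4d}, we have |S_i| ≤ n/2^i for all i; in particular
S_i is empty for every i > log₂ n. -/
theorem stmt17 {V : Type*} [Fintype V] (G : SimpleGraph V) (d n : ℕ) (hd : 0 < d)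
    (hn : Fintype.card V = n) (hG : IsDegenerate G d)
    (S : ℕ → Set V) (hS0 : S 0 = Set.univ)
    (hSi : ∀ i, S (i + 1) = {v ∈ S i | 4 * d ≤ (S i ∩ G.neighborSet v).ncard}) :
    (∀ i, ((S i).ncard : ℝ) ≤ (n : ℝ) / 2 ^ i) ∧
      (∀ i : ℕ, Real.logb 2 n < i → S i = ∅) := by
  classical
  have hfin : ∀ i, (S i).Finite := fun i => Set.toFinite _
  have hhalf : ∀ i, 2 * (S (i + 1)).ncard ≤ (S i).ncard := by
    intro i
    set s := (hfin i).toFinset with hs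
    have hsc : (↑s : Set V) = S i := (hfin i).coe_toFinset
    have heq : ∀ v, (S i ∩ G.neighborSet v).ncard = ({u ∈ s | G.Adj v u}).card := by
      intro v
      rw [← Set.ncard_coe_finset]
      congr 1
      ext u
      simp only [Finset.coe_filter, Set.mem_setOf_eq, Set.mem_inter_iff,
        SimpleGraph.mem_neighborSet, ← hsc, Finset.mem_coe]
    have hnext : (S (i + 1)).ncard
        = ({v ∈ s | 4 * d ≤ ({u ∈ s | G.Adj v u}).card}).card := by
      rw [← Set.ncard_coe_finset]
      congr 1
      ext v
      simp only [hSi i, Set.mem_setOf_eq, Finset.coe_filter, (hfin i).mem_toFinset, heq, hs]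
    rw [hnext, ← hsc, Set.ncard_coe_finset]
    exact half_le G d hd hG s
  have hmain : ∀ i, ((S i).ncard : ℝ) ≤ (n : ℝ) / 2 ^ i := by
    intro i
    induction i with
    | zero => simp [hS0, Set.ncard_univ, Nat.card_coe_set_eq, hn,
        Nat.card_eq_fintype_card]
    | succ i ih =>
      have h1 : ((S (i + 1)).ncard : ℝ) ≤ ((S i).ncard : ℝ) / 2 := by
        have := hhalf i
        have : (2 : ℝ) * (S (i + 1)).ncard ≤ (S i).ncard := by exact_mod_cast this
        linarith
      calc ((S (i + 1)).ncard : ℝ) ≤ ((S i).ncard : ℝ) / 2 := h1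
        _ ≤ (n : ℝ) / 2 ^ i / 2 := by linarith
        _ = (n : ℝ) / 2 ^ (i + 1) := by ring
  refine ⟨hmain, fun i hlog => ?_⟩
  rcases Nat.eq_zero_or_pos n with rfl | hnpos
  · have : IsEmpty V := Fintype.card_eq_zero_iff.mp hn
    exact Set.eq_empty_of_isEmpty _
  · have h2 : (n : ℝ) < 2 ^ i := by
      have := (Real.logb_lt_iff_lt_rpow (by norm_num) (by exact_mod_cast hnpos)).mp hlog
      rwa [Real.rpow_natCast] at this
    have hlt : ((S i).ncard : ℝ) < 1 := by
      have hpow : (0 : ℝ) < 2 ^ i := by positivity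
      calc ((S i).ncard : ℝ) ≤ (n : ℝ) / 2 ^ i := hmain i
        _ < 1 := by rw [div_lt_one hpow]; exact h2
    have : (S i).ncard = 0 := by exact_mod_cast Nat.lt_one_iff.mp (by exact_mod_cast hlt)
    exact (Set.ncard_eq_zero (hfin i)).mp this
end

section
/- Let k be a positive integer, let M > 0 be a real number, let x be a real number with 0 ≤ x ≤ kM, let J be uniformly distributed on {1,…,k}, and let X := min(M, x/J). Then E[X] ≤ x·(2 + ln k)/k. -/
/-- For J uniform on {1,…,k} and X = min(M, x/j) with 0 ≤ x ≤ kM,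
the expectation E[X] = (1/k)·∑_{j=1}^{k} min(M, x/j) satisfies E[X] ≤ x·(2 + ln k)/k. -/
theorem stmt18 (k : ℕ) (hk : 1 ≤ k) (M x : ℝ) (hM : 0 < M)
    (hx0 : 0 ≤ x) (hxk : x ≤ k * M) :
    (∑ j ∈ Finset.Icc 1 k, min M (x / (j : ℝ))) / k ≤ x * (2 + Real.log k) / k := by
  have hk0 : (0:ℝ) < k := by exact_mod_cast hk
  rw [div_le_div_iff_of_pos_right hk0]
  calc ∑ j ∈ Finset.Icc 1 k, min M (x / (j : ℝ))
      ≤ ∑ j ∈ Finset.Icc 1 k, x * ((j : ℝ))⁻¹ := by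
        apply Finset.sum_le_sum
        intro j hj
        rw [mul_comm, inv_mul_eq_div]
        exact min_le_right _ _
    _ = x * (harmonic k : ℝ) := by
        rw [harmonic_eq_sum_Icc]
        push_cast
        rw [Finset.mul_sum]
    _ ≤ x * (1 + Real.log k) :=
        mul_le_mul_of_nonneg_left (harmonic_le_one_add_log k) hx0
    _ ≤ x * (2 + Real.log k) := by nlinarith
end

section
/- Let k be a positive integer, let M > 0 be a real number, let x be a real number with 0 ≤ x ≤ kM, let J be uniformly distributed on {1,…,k}, and let X := min(M, x/J). Then E[(X − E[X])²] ≤ 2·(E[X])² + (1 + π²/6)·M·x/k. -/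
/-!
Subtracting the mean only lowers the sum of squares, so it suffices to bound
`∑ min(M, x/j)²` by `(1 + π²/6) M x`. With `m = ⌊x/M⌋`, the `m` terms with `j ≤ m` contribute at
most `m M² ≤ M x`; the remaining ones are at most `x²/j²`, and `x² ∑_{j>m} 1/j² ≤ (π²/6) M x`
because `∑_{j>m} 1/j² ≤ 2/(2m+1)` by telescoping (with the Basel sum covering `m = 0`).
-/
open Real Finset

theorem sum_sub_div_card_sq_le_sum_sq {ι : Type*} (s : Finset ι) (a : ι → ℝ) :
    ∑ i ∈ s, (a i - (∑ j ∈ s, a j) / #s) ^ 2 ≤ ∑ i ∈ s, a i ^ 2 := by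
  rcases s.eq_empty_or_nonempty with rfl | hs
  · simp
  have hcard : (#s : ℝ) ≠ 0 := by exact_mod_cast hs.card_pos.ne'
  set μ := (∑ j ∈ s, a j) / #s
  have hsum : ∑ j ∈ s, a j = #s * μ := by simp only [μ]; field_simp
  have expand : ∑ i ∈ s, (a i - μ) ^ 2 = ∑ i ∈ s, a i ^ 2 - #s * μ ^ 2 := by
    simp only [sub_sq, sum_add_distrib, sum_sub_distrib, ← sum_mul, ← mul_sum, hsum,
      sum_const, nsmul_eq_mul]
    ring
  rw [expand]
  nlinarith [sq_nonneg μ, (#s).cast_nonneg (α := ℝ)]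

theorem one_div_sq_le_two_div_sub_two_div (k : ℕ) :
    1 / ((k + 1 : ℕ) : ℝ) ^ 2 ≤ 2 / (2 * (k : ℝ) + 1) - 2 / (2 * ((k + 1 : ℕ) : ℝ) + 1) := by
  push_cast
  rw [div_sub_div _ _ (by positivity) (by positivity),
    div_le_div_iff₀ (by positivity) (by positivity)]
  nlinarith [k.cast_nonneg (α := ℝ)]

theorem sum_Ioc_one_div_sq_le_sub {m k : ℕ} (hmk : m ≤ k) :
    ∑ j ∈ Ioc m k, 1 / (j : ℝ) ^ 2 ≤ 2 / (2 * (m : ℝ) + 1) - 2 / (2 * (k : ℝ) + 1) := by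
  induction k, hmk using Nat.le_induction with
  | base => simp
  | succ k hmk ih =>
    rw [sum_Ioc_succ_top hmk]
    linarith [one_div_sq_le_two_div_sub_two_div k]

theorem sum_Ioc_one_div_sq_le (m k : ℕ) :
    ∑ j ∈ Ioc m k, 1 / (j : ℝ) ^ 2 ≤ 2 / (2 * (m : ℝ) + 1) := by
  rcases le_or_gt m k with hmk | hkm
  · linarith [sum_Ioc_one_div_sq_le_sub hmk, show (0 : ℝ) ≤ 2 / (2 * (k : ℝ) + 1) by positivity]
  · rw [Ioc_eq_empty (by omega), sum_empty]
    positivity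

theorem sum_Ioc_one_div_sq_le_zeta_two (m k : ℕ) :
    ∑ j ∈ Ioc m k, 1 / (j : ℝ) ^ 2 ≤ π ^ 2 / 6 :=
  sum_le_hasSum _ (fun _ _ => by positivity) hasSum_zeta_two

theorem mul_sum_Ioc_floor_one_div_sq_le {t : ℝ} (ht : 0 ≤ t) (k : ℕ) :
    t * ∑ j ∈ Ioc ⌊t⌋₊ k, 1 / (j : ℝ) ^ 2 ≤ π ^ 2 / 6 := by
  set m := ⌊t⌋₊
  have htm : t < m + 1 := Nat.lt_floor_add_one t
  have hS : 0 ≤ ∑ j ∈ Ioc m k, 1 / (j : ℝ) ^ 2 := sum_nonneg fun _ _ => by positivity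
  rcases Nat.eq_zero_or_pos m with hm | hm
  · have hS' := sum_Ioc_one_div_sq_le_zeta_two m k
    rw [hm, Nat.cast_zero, zero_add] at htm
    nlinarith
  · have hm1 : (1 : ℝ) ≤ m := by exact_mod_cast hm
    calc t * ∑ j ∈ Ioc m k, 1 / (j : ℝ) ^ 2 ≤ (m + 1) * (2 / (2 * (m : ℝ) + 1)) := by
          gcongr
          exact sum_Ioc_one_div_sq_le m k
      _ ≤ 3 / 2 := by
          rw [mul_div_assoc', div_le_div_iff₀ (by positivity) (by norm_num)]
          linarith
      _ ≤ π ^ 2 / 6 := by nlinarith [pi_gt_three]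

theorem sum_Icc_min_div_sq_le {M x : ℝ} (hM : 0 < M) (hx : 0 ≤ x) (k : ℕ) :
    ∑ j ∈ Icc 1 k, min M (x / j) ^ 2 ≤ (1 + π ^ 2 / 6) * M * x := by
  set m := ⌊x / M⌋₊
  have hxM : 0 ≤ x / M := by positivity
  have hsplit : ∑ j ∈ Icc 1 k, min M (x / j) ^ 2
      ≤ ∑ j ∈ Icc 1 m, min M (x / j) ^ 2 + ∑ j ∈ Ioc m k, min M (x / j) ^ 2 := by
    rw [← sum_union (disjoint_left.2 fun j hj hj' => by simp at hj hj'; omega)]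
    exact sum_le_sum_of_subset_of_nonneg (fun j hj => by simp at hj ⊢; omega)
      fun _ _ _ => sq_nonneg _
  have hhead : ∑ j ∈ Icc 1 m, min M (x / j) ^ 2 ≤ M * x := by
    calc ∑ j ∈ Icc 1 m, min M (x / j) ^ 2 ≤ #(Icc 1 m) • M ^ 2 :=
          sum_le_card_nsmul _ _ _ fun j _ =>
            pow_le_pow_left₀ (le_min hM.le (by positivity)) (min_le_left _ _) 2
      _ ≤ x / M * M ^ 2 := by
          rw [Nat.card_Icc, add_tsub_cancel_right, nsmul_eq_mul]
          gcongr
          exact Nat.floor_le hxM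
      _ = M * x := by field_simp
  have htail : ∑ j ∈ Ioc m k, min M (x / j) ^ 2 ≤ π ^ 2 / 6 * (M * x) := by
    calc ∑ j ∈ Ioc m k, min M (x / j) ^ 2 ≤ ∑ j ∈ Ioc m k, (x / j) ^ 2 :=
          sum_le_sum fun j _ =>
            pow_le_pow_left₀ (le_min hM.le (by positivity)) (min_le_right _ _) 2
      _ = M * x * (x / M * ∑ j ∈ Ioc m k, 1 / (j : ℝ) ^ 2) := by
          rw [mul_sum, mul_sum]
          refine sum_congr rfl fun j _ => ?_
          field_simp
      _ ≤ M * x * (π ^ 2 / 6) := by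
          gcongr
          exact mul_sum_Ioc_floor_one_div_sq_le hxM k
      _ = π ^ 2 / 6 * (M * x) := mul_comm _ _
  linarith

theorem stmt19_general (k : ℕ) (M x : ℝ) (hM : 0 < M)
    (hx0 : 0 ≤ x) (EX : ℝ)
    (hEX : EX = (∑ j ∈ Finset.Icc 1 k, min M (x / (j : ℝ))) / k) :
    (∑ j ∈ Finset.Icc 1 k, (min M (x / (j : ℝ)) - EX) ^ 2) / k ≤
      2 * EX ^ 2 + (1 + π ^ 2 / 6) * M * x / k := by
  have hvar : ∑ j ∈ Icc 1 k, (min M (x / j) - EX) ^ 2 ≤ ∑ j ∈ Icc 1 k, min M (x / j) ^ 2 := by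
    have := sum_sub_div_card_sq_le_sum_sq (Icc 1 k) fun j : ℕ => min M (x / j)
    rwa [Nat.card_Icc, add_tsub_cancel_right, ← hEX] at this
  calc (∑ j ∈ Icc 1 k, (min M (x / j) - EX) ^ 2) / k
      ≤ (1 + π ^ 2 / 6) * M * x / k := by
        gcongr
        exact hvar.trans (sum_Icc_min_div_sq_le hM hx0 k)
    _ ≤ 2 * EX ^ 2 + (1 + π ^ 2 / 6) * M * x / k := le_add_of_nonneg_left (by positivity)

/-- For J uniform on {1,…,k} and X = min(M, x/J) with 0 ≤ x ≤ kM, writing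
E[X] = (1/k)·∑_{j=1}^{k} min(M, x/j), the variance
E[(X − E[X])²] = (1/k)·∑_{j=1}^{k} (min(M, x/j) − E[X])² satisfies
E[(X − E[X])²] ≤ 2·(E[X])² + (1 + π²/6)·M·x/k. -/
theorem stmt19 (k : ℕ) (hk : 1 ≤ k) (M x : ℝ) (hM : 0 < M)
    (hx0 : 0 ≤ x) (hxk : x ≤ k * M) (EX : ℝ)
    (hEX : EX = (∑ j ∈ Finset.Icc 1 k, min M (x / (j : ℝ))) / k) :
    (∑ j ∈ Finset.Icc 1 k, (min M (x / (j : ℝ)) - EX) ^ 2) / k ≤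
      2 * EX ^ 2 + (1 + π ^ 2 / 6) * M * x / k :=
  stmt19_general k M x hM hx0 EX hEX
end
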